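/- arXiv:alg-geom/9307010 — 5 statements merged into one kernel-verified Lean document; each statement's English description precedes it below -/
import Mathlib

section
/- Let d ≥ 1 and m ≥ 1 be integers, let P₀, …, P_{m−1} ∈ ℂ[y] be polynomials and P_m(y) = y^{d+1}. Let 𝒟 = Σ_{j=0}^{m} z^{m−j}·P_j(Θ) and let 𝒟'_Θ = Σ_{j=0}^{m} z^{m−j}·P_j'(Θ), where P_j' is the formal derivative of the polynomial P_j. Let Φ₀ ∈ ℂ[[z]] be the unique power series solution of 𝒟Φ = 0 with Φ₀(0) = 1 (the socle solution). Then there exists a unique power series Ψ ∈ ℂ[[z]] with Ψ(0) = 0 satisfying 𝒟'_Θ Φ₀ + 𝒟 Ψ = 0. -/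
open PowerSeries

/-- The logarithmic derivative operator `Θ = z·d/dz` on formal power series,
sending `Σ aₙ zⁿ` to `Σ n·aₙ zⁿ`. -/
noncomputable def theta : Module.End ℂ (PowerSeries ℂ) where
  toFun f := PowerSeries.mk fun n => (n : ℂ) * PowerSeries.coeff n f
  map_add' f g := by
    ext n
    simp [mul_add]
  map_smul' c f := by
    ext n
    simp
    ring

/-- For a polynomial `P(y) = Σ pᵢ yⁱ`, the operator `P(Θ) = Σ pᵢ Θⁱ`. -/
noncomputable def polyTheta (P : Polynomial ℂ) : Module.End ℂ (PowerSeries ℂ) :=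
  Polynomial.aeval theta P

/-- The operator `𝒟 = Σ_{j=0}^{m} z^{m−j}·P_j(Θ)` acting on `ℂ[[z]]`. -/
noncomputable def MUop (m : ℕ) (P : ℕ → Polynomial ℂ) (Φ : PowerSeries ℂ) : PowerSeries ℂ :=
  ∑ j ∈ Finset.range (m + 1), (PowerSeries.X : PowerSeries ℂ) ^ (m - j) * polyTheta (P j) Φ

/-- The operator `𝒟'_Θ = Σ_{j=0}^{m} z^{m−j}·P_j'(Θ)`, where `P_j'` is the formal
derivative of the polynomial `P_j`. -/
noncomputable def MUopDeriv (m : ℕ) (P : ℕ → Polynomial ℂ) (Φ : PowerSeries ℂ) : PowerSeries ℂ :=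
  ∑ j ∈ Finset.range (m + 1),
    (PowerSeries.X : PowerSeries ℂ) ^ (m - j) * polyTheta (Polynomial.derivative (P j)) Φ

lemma coeff_theta (n : ℕ) (f : PowerSeries ℂ) :
    PowerSeries.coeff n (theta f) = (n : ℂ) * PowerSeries.coeff n f := by
  simp [theta]

lemma coeff_theta_pow (i n : ℕ) (f : PowerSeries ℂ) :
    PowerSeries.coeff n ((theta ^ i) f) = (n : ℂ) ^ i * PowerSeries.coeff n f := by
  induction i with
  | zero => simp
  | succ i ih =>
    rw [pow_succ', Module.End.mul_apply, coeff_theta, ih]; ring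

lemma coeff_polyTheta (Q : Polynomial ℂ) (n : ℕ) (f : PowerSeries ℂ) :
    PowerSeries.coeff n (polyTheta Q f) = Q.eval (n : ℂ) * PowerSeries.coeff n f := by
  induction Q using Polynomial.induction_on' with
  | add p q hp hq =>
    simp only [polyTheta, map_add] at *
    simp [LinearMap.add_apply, hp, hq, Polynomial.eval_add]; ring
  | monomial i c =>
    simp only [polyTheta, Polynomial.aeval_monomial, Polynomial.eval_monomial]
    rw [Module.End.mul_apply, Module.algebraMap_end_apply, map_smul, coeff_theta_pow]
    simp; ring


lemma coeff_MUop (m : ℕ) (P : ℕ → Polynomial ℂ) (f : PowerSeries ℂ) (n : ℕ) :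
    PowerSeries.coeff n (MUop m P f) =
      ∑ j ∈ Finset.range (m + 1),
        if m - j ≤ n then (P j).eval ((n - (m - j) : ℕ) : ℂ) *
          PowerSeries.coeff (n - (m - j)) f else 0 := by
  rw [MUop, map_sum]
  refine Finset.sum_congr rfl fun j _ => ?_
  rw [PowerSeries.coeff_X_pow_mul']
  split
  · rw [coeff_polyTheta]
  · rfl

lemma MUopDeriv_eq (m : ℕ) (P : ℕ → Polynomial ℂ) (f : PowerSeries ℂ) :
    MUopDeriv m P f = MUop m (fun j => Polynomial.derivative (P j)) f := rfl

lemma MUop_sub (m : ℕ) (P : ℕ → Polynomial ℂ) (f g : PowerSeries ℂ) :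
    MUop m P (f - g) = MUop m P f - MUop m P g := by
  simp only [MUop, map_sub, mul_sub, Finset.sum_sub_distrib]

noncomputable def solCoeff (m d : ℕ) (P : ℕ → Polynomial ℂ) (G : PowerSeries ℂ) : ℕ → ℂ
  | n =>
    if h : n = 0 then 0 else
      (PowerSeries.coeff n G - ∑ j ∈ Finset.range m,
        if hj : 1 ≤ m - j ∧ m - j ≤ n then
          (P j).eval ((n - (m - j) : ℕ) : ℂ) * solCoeff m d P G (n - (m - j)) else 0)
        / (n : ℂ) ^ (d + 1)
  decreasing_by omega

lemma solCoeff_zero (m d : ℕ) (P : ℕ → Polynomial ℂ) (G : PowerSeries ℂ) :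
    solCoeff m d P G 0 = 0 := by rw [solCoeff]; simp

lemma MUop_sol (m d : ℕ) (P : ℕ → Polynomial ℂ) (hPm : P m = Polynomial.X ^ (d + 1))
    (G : PowerSeries ℂ) (hG0 : PowerSeries.coeff 0 G = 0) :
    MUop m P (PowerSeries.mk (solCoeff m d P G)) = G := by
  ext n
  rw [coeff_MUop, Finset.sum_range_succ]
  simp only [Nat.sub_self, Nat.sub_zero, if_pos (Nat.zero_le n), hPm, Polynomial.eval_pow,
    Polynomial.eval_X, coeff_mk]
  have hmid : ∑ j ∈ Finset.range m,
      (if m - j ≤ n then (P j).eval ((n - (m - j) : ℕ) : ℂ) *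
        solCoeff m d P G (n - (m - j)) else 0)
      = ∑ j ∈ Finset.range m,
      (if 1 ≤ m - j ∧ m - j ≤ n then (P j).eval ((n - (m - j) : ℕ) : ℂ) *
        solCoeff m d P G (n - (m - j)) else 0) := by
    refine Finset.sum_congr rfl fun j hj => ?_
    have hj' := Finset.mem_range.mp hj
    split_ifs with h1 h2 h2 <;> first | rfl | omega
  rw [hmid]
  by_cases hn : n = 0
  · subst hn
    rw [hG0]
    have : ∀ j ∈ Finset.range m,
        (if 1 ≤ m - j ∧ m - j ≤ 0 then (P j).eval ((0 - (m - j) : ℕ) : ℂ) *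
          solCoeff m d P G (0 - (m - j)) else 0) = 0 := by
      intro j hj
      rw [if_neg]; omega
    rw [Finset.sum_congr rfl this]
    simp
  · have hne : ((n : ℂ)) ^ (d + 1) ≠ 0 := pow_ne_zero _ (Nat.cast_ne_zero.mpr hn)
    have key : ((n : ℂ)) ^ (d + 1) * solCoeff m d P G n
        = PowerSeries.coeff n G - ∑ j ∈ Finset.range m,
          (if 1 ≤ m - j ∧ m - j ≤ n then (P j).eval ((n - (m - j) : ℕ) : ℂ) *
            solCoeff m d P G (n - (m - j)) else 0) := by
      conv_lhs => rw [solCoeff]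
      rw [dif_neg hn, mul_comm, div_mul_cancel₀ _ hne]
      congr 1
    rw [add_comm, key]
    ring

lemma sol_unique (m d : ℕ) (hm : 1 ≤ m) (P : ℕ → Polynomial ℂ)
    (hPm : P m = Polynomial.X ^ (d + 1)) (f : PowerSeries ℂ)
    (h0 : PowerSeries.coeff 0 f = 0) (hf : MUop m P f = 0) : f = 0 := by
  ext n
  induction n using Nat.strong_induction_on with
  | _ n ih =>
    rcases Nat.eq_zero_or_pos n with h | h
    · simpa [h] using h0
    · have hc := congrArg (PowerSeries.coeff n) hf
      rw [coeff_MUop, Finset.sum_range_succ] at hc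
      simp only [Nat.sub_self, Nat.sub_zero, if_pos (Nat.zero_le n), hPm, Polynomial.eval_pow,
        Polynomial.eval_X, map_zero] at hc
      have hmid : ∀ j ∈ Finset.range m,
          (if m - j ≤ n then (P j).eval ((n - (m - j) : ℕ) : ℂ) *
            PowerSeries.coeff (n - (m - j)) f else 0) = 0 := by
        intro j hj
        have hj' := Finset.mem_range.mp hj
        split_ifs with h1
        · rw [ih (n - (m - j)) (by omega)]; simp
        · rfl
      rw [Finset.sum_congr rfl hmid] at hc
      simp only [Finset.sum_const_zero, zero_add] at hc
      have hne : ((n : ℂ)) ^ (d + 1) ≠ 0 := pow_ne_zero _ (Nat.cast_ne_zero.mpr (by omega))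
      simpa [map_zero] using (mul_eq_zero.mp hc).resolve_left hne


/-- Let `d ≥ 1`, `m ≥ 1`, `P₀, …, P_{m−1}` polynomials and `P_m(y) = y^{d+1}`; let `Φ₀` be
the socle solution of `𝒟Φ = 0` (the power series solution with `Φ₀(0) = 1`). Then there is
a unique power series `Ψ` with `Ψ(0) = 0` satisfying `𝒟'_Θ Φ₀ + 𝒟 Ψ = 0`. -/
theorem unique_regular_log_part (d m : ℕ) (hd : 1 ≤ d) (hm : 1 ≤ m) (P : ℕ → Polynomial ℂ)
    (hPm : P m = Polynomial.X ^ (d + 1)) (Φ₀ : PowerSeries ℂ)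
    (hΦ₀0 : PowerSeries.coeff 0 Φ₀ = 1) (hΦ₀ : MUop m P Φ₀ = 0) :
    ∃! Ψ : PowerSeries ℂ, PowerSeries.coeff 0 Ψ = 0 ∧ MUopDeriv m P Φ₀ + MUop m P Ψ = 0 := by
  set G : PowerSeries ℂ := -(MUopDeriv m P Φ₀) with hG
  have hG0 : PowerSeries.coeff 0 G = 0 := by
    rw [hG, map_neg, MUopDeriv_eq, coeff_MUop, neg_eq_zero]
    refine Finset.sum_eq_zero fun j hj => ?_
    have hj' := Finset.mem_range.mp hj
    split_ifs with h1
    · rcases Nat.lt_or_ge j m with hjm | hjm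
      · omega
      · have hjeq : j = m := le_antisymm (by omega) hjm
        have hd' : d ≠ 0 := by omega
        rw [hjeq, Nat.sub_self, hPm]
        simp [Polynomial.derivative_X_pow, hd']
    · rfl
  refine ⟨PowerSeries.mk (solCoeff m d P G), ⟨?_, ?_⟩, ?_⟩
  · simpa using solCoeff_zero m d P G
  · rw [MUop_sol m d P hPm G hG0, hG]; ring
  · rintro Ψ' ⟨h0', heq'⟩
    have hdiff : MUop m P (Ψ' - PowerSeries.mk (solCoeff m d P G)) = 0 := by
      rw [MUop_sub, MUop_sol m d P hPm G hG0]
      have : MUop m P Ψ' = G := by rw [hG]; linear_combination heq'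
      rw [this, sub_self]
    have h0diff : PowerSeries.coeff 0 (Ψ' - PowerSeries.mk (solCoeff m d P G)) = 0 := by
      rw [map_sub, h0']
      simpa using solCoeff_zero m d P G
    have := sol_unique m d hm P hPm _ h0diff hdiff
    have := sub_eq_zero.mp this
    exact this
end

section
/- Let R be a commutative ring equipped with a derivation Θ : R → R, let d ≥ 1 be an integer, let W : ℕ × ℕ → R be a doubly indexed family of elements of R, and let C₀, …, C_d ∈ R. Assume: (i) W(k,l) = (−1)^d·W(l,k) for all k, l; (ii) W(k,l) = 0 whenever k + l < d; (iii) Θ(W(k,l)) = W(k+1,l) + W(k,l+1) for all k, l; (iv) W(d+k+1, 0) + Σ_{i=0}^{d} C_i·W(i+k, 0) = 0 for all k ≥ 0. Then (d+1)·Θ(W(d,0)) + 2·C_d·W(d,0) = 0. -/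
/-- Let `R` be a commutative ring with a derivation `Θ`, let `d ≥ 1`, let `W : ℕ × ℕ → R`
and `C₀, …, C_d ∈ R` satisfy: (i) `W(k,l) = (−1)^d W(l,k)`; (ii) `W(k,l) = 0` for
`k + l < d`; (iii) `Θ W(k,l) = W(k+1,l) + W(k,l+1)`; (iv) `W(d+k+1,0) + Σ_{i=0}^{d}
Cᵢ·W(i+k,0) = 0` for all `k ≥ 0`. Then `(d+1)·Θ(W(d,0)) + 2·C_d·W(d,0) = 0`. -/
theorem yukawa_first_order_equation {R : Type*} [CommRing R] (Θ : Derivation ℤ R R)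
    (d : ℕ) (hd : 1 ≤ d) (W : ℕ → ℕ → R) (C : ℕ → R)
    (h1 : ∀ k l, W k l = (-1) ^ d * W l k)
    (h2 : ∀ k l, k + l < d → W k l = 0)
    (h3 : ∀ k l, Θ (W k l) = W (k + 1) l + W k (l + 1))
    (h4 : ∀ k : ℕ, W (d + k + 1) 0 + ∑ i ∈ Finset.range (d + 1), C i * W (i + k) 0 = 0) :
    ((d : R) + 1) * Θ (W d 0) + 2 * C d * W d 0 = 0 := by
  -- Lemma 1: diagonal values alternate
  have L1 : ∀ j, j ≤ d → W (d - j) j = (-1) ^ j * W d 0 := by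
    intro j
    induction j with
    | zero => intro _; simp
    | succ j ih =>
      intro hj
      have hj' : j ≤ d := Nat.le_of_succ_le hj
      have hz : W (d - (j + 1)) j = 0 := by
        apply h2
        omega
      have := h3 (d - (j + 1)) j
      rw [hz] at this
      simp only [map_zero] at this
      have hidx : d - (j + 1) + 1 = d - j := by omega
      rw [hidx] at this
      have : W (d - (j + 1)) (j + 1) = -W (d - j) j := by linear_combination -this
      rw [this, ih hj']
      ring
  set T := Θ (W d 0) with hT
  -- Lemma 3: W(d+1-j, j) + W(d-j, j+1) = (-1)^j * T for j ≤ d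
  have L3 : ∀ j, j ≤ d → W (d + 1 - j) j + W (d - j) (j + 1) = (-1) ^ j * T := by
    intro j hj
    have h := h3 (d - j) j
    rw [L1 j hj] at h
    have hidx : d - j + 1 = d + 1 - j := by omega
    rw [hidx] at h
    have hTh : Θ ((-1 : R) ^ j * W d 0) = (-1) ^ j * T := by
      rcases Nat.even_or_odd j with he | ho
      · rw [he.neg_one_pow]; simp [hT]
      · rw [ho.neg_one_pow]; simp [hT]
    rw [hTh] at h
    linear_combination -h
  -- b0 = W(d+1,0) = -C d * W d 0
  have hb0 : W (d + 1) 0 = -(C d * W d 0) := by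
    have h := h4 0
    have hsum : ∑ i ∈ Finset.range (d + 1), C i * W (i + 0) 0 = C d * W (d + 0) 0 := by
      rw [Finset.sum_range_succ]
      have : ∀ i ∈ Finset.range d, C i * W (i + 0) 0 = 0 := by
        intro i hi
        rw [Finset.mem_range] at hi
        rw [h2 (i + 0) 0 (by omega), mul_zero]
      rw [Finset.sum_eq_zero this, zero_add]
    rw [hsum] at h
    simp only [Nat.add_zero] at h ⊢
    linear_combination h
  -- Lemma 4: W (d+1-j) j = (-1)^(j+1) * (j*T - W(d+1) 0)
  have L4 : ∀ j, j ≤ d + 1 → W (d + 1 - j) j = (-1) ^ (j + 1) * ((j : R) * T - W (d + 1) 0) := by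
    intro j
    induction j with
    | zero => intro _; simp
    | succ j ih =>
      intro hj
      have hj' : j ≤ d := by omega
      have h3j := L3 j hj'
      have hidx : d - j = d + 1 - (j + 1) := by omega
      rw [hidx, ih (by omega)] at h3j
      have : W (d + 1 - (j + 1)) (j + 1)
          = (-1) ^ j * T - (-1) ^ (j + 1) * ((j : R) * T - W (d + 1) 0) := by
        linear_combination h3j
      rw [this]
      push_cast
      ring
  -- Symmetry at j = d+1
  have hsym : W (d + 1) 0 = (-1) ^ d * W 0 (d + 1) := h1 (d + 1) 0
  have hend : W 0 (d + 1) = (-1) ^ (d + 1 + 1) * (((d : R) + 1) * T - W (d + 1) 0) := by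
    have := L4 (d + 1) (le_refl _)
    simpa using this
  rw [hend] at hsym
  have hpow : ((-1 : R) ^ d * (-1) ^ (d + 1 + 1)) = 1 := by
    rw [← pow_add]
    have : d + (d + 1 + 1) = 2 * (d + 1) := by omega
    rw [this, pow_mul]
    norm_num
  have key : W (d + 1) 0 = ((d : R) + 1) * T - W (d + 1) 0 := by
    calc W (d + 1) 0 = (-1) ^ d * ((-1) ^ (d + 1 + 1) * (((d : R) + 1) * T - W (d + 1) 0)) := hsym
    _ = ((-1 : R) ^ d * (-1) ^ (d + 1 + 1)) * (((d : R) + 1) * T - W (d + 1) 0) := by ring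
    _ = ((d : R) + 1) * T - W (d + 1) 0 := by rw [hpow, one_mul]
  rw [hb0] at key
  linear_combination -key
end

section
/- For n ∈ ℕ let bₙ = Σ_{k=0}^{n} (binomial(n,k))³ (the n-th Franel number). Then for every integer n ≥ 1, (n+1)²·b_{n+1} = (7n² + 7n + 2)·bₙ + 8n²·b_{n−1}. -/
open Finset

/-- Polynomial part of the Zeilberger certificate for the Franel recurrence. -/
noncomputable def franelCert (m k : ℕ) : ℚ :=
  4 * (k : ℚ) ^ 3 - 6 * (3 * (m : ℚ) + 5) * (k : ℚ) ^ 2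
    + 3 * ((m : ℚ) + 2) * (9 * (m : ℚ) + 13) * (k : ℚ)
    - 2 * ((m : ℚ) + 2) ^ 2 * (7 * (m : ℚ) + 9)

/-- The certificate function `G(m,k)`. -/
noncomputable def franelG (m : ℕ) : ℕ → ℚ
  | 0 => 0
  | (j + 1) => (((m + 1).choose j : ℕ) : ℚ) ^ 3 * franelCert m (j + 1) / ((m : ℚ) + 1)

lemma franel_absorb (m j : ℕ) :
    ((j : ℚ) + 1) * (((m + 1).choose (j + 1) : ℕ) : ℚ) = ((m : ℚ) + 1) * ((m.choose j : ℕ) : ℚ) := by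
  have h2 : ((Nat.succ m * m.choose j : ℕ) : ℚ) = (((m + 1).choose (j + 1) * (j + 1) : ℕ) : ℚ) := by
    rw [Nat.add_one_mul_choose_eq m j]
  push_cast at h2
  linarith

lemma franel_sub (m j : ℕ) :
    ((m : ℚ) + 1 - (j : ℚ)) * (((m + 1).choose j : ℕ) : ℚ)
      = ((m : ℚ) + 1) * ((m.choose j : ℕ) : ℚ) := by
  rcases le_or_gt j (m + 1) with hj | hj
  · have h : ((m.choose j * (m + 1) : ℕ) : ℚ) = (((m + 1).choose j * (m + 1 - j) : ℕ) : ℚ) := by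
      rw [Nat.choose_mul_succ_eq m j]
    push_cast [Nat.cast_sub hj] at h
    linarith
  · rw [Nat.choose_eq_zero_of_lt hj, Nat.choose_eq_zero_of_lt (by omega)]
    push_cast; ring

lemma franel_local (m k : ℕ) :
    ((m : ℚ) + 2) ^ 2 * (((m + 2).choose k : ℕ) : ℚ) ^ 3
      - (7 * (m : ℚ) ^ 2 + 21 * (m : ℚ) + 16) * (((m + 1).choose k : ℕ) : ℚ) ^ 3
      - 8 * ((m : ℚ) + 1) ^ 2 * ((m.choose k : ℕ) : ℚ) ^ 3
      = franelG m (k + 1) - franelG m k := by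
  have hm : (m : ℚ) + 1 ≠ 0 := by positivity
  cases k with
  | zero =>
      simp only [franelG, franelCert, Nat.choose_zero_right]
      push_cast
      field_simp
      ring
  | succ j =>
      have hj : (j : ℚ) + 1 ≠ 0 := by positivity
      set u : ℚ := (((m + 1).choose j : ℕ) : ℚ) with hu_def
      set x : ℚ := ((m.choose j : ℕ) : ℚ) with hx_def
      set v : ℚ := (((m + 1).choose (j + 1) : ℕ) : ℚ) with hv_def
      set y : ℚ := ((m.choose (j + 1) : ℕ) : ℚ) with hy_def
      set p : ℚ := (((m + 2).choose (j + 1) : ℕ) : ℚ) with hp_def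
      have hu : ((m : ℚ) + 1 - (j : ℚ)) * u = ((m : ℚ) + 1) * x := franel_sub m j
      have hv : ((j : ℚ) + 1) * v = ((m : ℚ) + 1) * x := franel_absorb m j
      have hp : ((j : ℚ) + 1) * p = ((m : ℚ) + 2) * u := by
        have h := franel_absorb (m + 1) j
        simp only [show m + 1 + 1 = m + 2 from rfl] at h
        push_cast at h
        linarith
      have hpas : v = x + y := by
        rw [hv_def, hx_def, hy_def, Nat.choose_succ_succ]
        push_cast; ring
      have hv' : ((j : ℚ) + 1) * v = ((m : ℚ) + 1 - (j : ℚ)) * u := by linarith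
      have hy' : ((j : ℚ) + 1) * ((m : ℚ) + 1) * y
          = ((m : ℚ) - (j : ℚ)) * ((m : ℚ) + 1 - (j : ℚ)) * u := by
        linear_combination ((m : ℚ) + 1) * hv' + ((j : ℚ) + 1) * hu
          - ((j : ℚ) + 1) * ((m : ℚ) + 1) * hpas
      have hp3 : (((j : ℚ) + 1) * p) ^ 3 = (((m : ℚ) + 2) * u) ^ 3 := by rw [hp]
      have hv3 : (((j : ℚ) + 1) * v) ^ 3 = (((m : ℚ) + 1 - (j : ℚ)) * u) ^ 3 := by rw [hv']
      have hy3 : (((j : ℚ) + 1) * ((m : ℚ) + 1) * y) ^ 3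
          = (((m : ℚ) - (j : ℚ)) * ((m : ℚ) + 1 - (j : ℚ)) * u) ^ 3 := by rw [hy']
      simp only [franelG, franelCert]
      rw [div_sub_div_same, eq_div_iff hm]
      refine mul_right_cancel₀ (pow_ne_zero 3 hj) ?_
      push_cast
      linear_combination ((((m : ℚ) + 2) ^ 2 * ((m : ℚ) + 1)) * hp3)
        - (((7 * (m : ℚ) ^ 2 + 21 * (m : ℚ) + 16) * ((m : ℚ) + 1)
            + (4 * ((j : ℚ) + 2) ^ 3 - 6 * (3 * (m : ℚ) + 5) * ((j : ℚ) + 2) ^ 2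
              + 3 * ((m : ℚ) + 2) * (9 * (m : ℚ) + 13) * ((j : ℚ) + 2)
              - 2 * ((m : ℚ) + 2) ^ 2 * (7 * (m : ℚ) + 9))) * hv3)
        - 8 * hy3

/-- The Franel numbers `bₙ = Σ_{k=0}^{n} (binomial(n,k))³` satisfy the recurrence
`(n+1)²·b_{n+1} = (7n² + 7n + 2)·bₙ + 8n²·b_{n−1}` for every `n ≥ 1`. -/
theorem franel_recurrence (b : ℕ → ℕ)
    (hb : ∀ n, b n = ∑ k ∈ Finset.range (n + 1), (n.choose k) ^ 3)
    (n : ℕ) (hn : 1 ≤ n) :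
    (n + 1) ^ 2 * b (n + 1) = (7 * n ^ 2 + 7 * n + 2) * b n + 8 * n ^ 2 * b (n - 1) := by
  obtain ⟨m, rfl⟩ : ∃ m, n = m + 1 := ⟨n - 1, (Nat.succ_pred_eq_of_pos hn).symm⟩
  simp only [hb, Nat.add_sub_cancel]
  rw [← Nat.cast_inj (R := ℚ)]
  push_cast
  have hext : ∀ i : ℕ, i ≤ m + 3 →
      (∑ k ∈ range (i + 1), ((i.choose k : ℕ) : ℚ) ^ 3)
        = ∑ k ∈ range (m + 4), ((i.choose k : ℕ) : ℚ) ^ 3 := by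
    intro i hi
    refine Finset.sum_subset ?_ ?_
    · intro x hx; simp only [mem_range] at *; omega
    · intro x _ hx
      simp only [mem_range, not_lt] at hx
      rw [Nat.choose_eq_zero_of_lt (by omega)]
      norm_num
  have h2 := hext (m + 1 + 1) (by omega)
  have h1 := hext (m + 1) (by omega)
  have h0 := hext m (by omega)
  rw [h2, h1, h0]
  have htel : ∑ k ∈ range (m + 4), (franelG m (k + 1) - franelG m k)
      = franelG m (m + 4) - franelG m 0 := Finset.sum_range_sub (franelG m) (m + 4)
  have hG0 : franelG m 0 = 0 := rfl
  have hGtop : franelG m (m + 4) = 0 := by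
    show (((m + 1).choose (m + 3) : ℕ) : ℚ) ^ 3 * _ / _ = 0
    rw [Nat.choose_eq_zero_of_lt (by omega)]
    norm_num
  have hsum : ∑ k ∈ range (m + 4),
      (((m : ℚ) + 2) ^ 2 * (((m + 2).choose k : ℕ) : ℚ) ^ 3
        - (7 * (m : ℚ) ^ 2 + 21 * (m : ℚ) + 16) * (((m + 1).choose k : ℕ) : ℚ) ^ 3
        - 8 * ((m : ℚ) + 1) ^ 2 * ((m.choose k : ℕ) : ℚ) ^ 3) = 0 := by
    calc _ = ∑ k ∈ range (m + 4), (franelG m (k + 1) - franelG m k) :=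
            Finset.sum_congr rfl fun k _ => franel_local m k
      _ = 0 := by rw [htel, hG0, hGtop]; ring
  rw [Finset.sum_sub_distrib, Finset.sum_sub_distrib, ← Finset.mul_sum, ← Finset.mul_sum,
    ← Finset.mul_sum] at hsum
  have hmm : (((m + 1 + 1 : ℕ)) : ℚ) = (m : ℚ) + 2 := by push_cast; ring
  linear_combination hsum
end

section
/- For n ∈ ℕ let aₙ = Σ_{k=0}^{n} (3n)!/((k!)³((n−k)!)³) ∈ ℚ. Then for every integer n ≥ 1, (n+1)⁴·a_{n+1} = 3·(7n² + 7n + 2)·(3n+2)·(3n+1)·aₙ + 72·(3n+2)·(3n+1)·(3n−1)·(3n−2)·a_{n−1}. -/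
open Nat

private lemma fc (x : ℕ) : ((x+1)! : ℚ) = ((x:ℚ)+1) * (x ! : ℚ) := by
  rw [Nat.factorial_succ]; push_cast; ring

private lemma fac2 (x : ℕ) : ((x+2)! : ℚ) = ((x:ℚ)+2)*((x:ℚ)+1) * (x ! : ℚ) := by
  rw [show x+2 = (x+1)+1 by omega, fc, fc]; push_cast; ring

private lemma fac3 (x : ℕ) : ((x+3)! : ℚ)
    = ((x:ℚ)+3)*((x:ℚ)+2)*((x:ℚ)+1) * (x ! : ℚ) := by
  rw [show x+3 = (x+2)+1 by omega, fc, fac2]; push_cast; ring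

private lemma fac6 (x : ℕ) : ((x+6)! : ℚ)
    = ((x:ℚ)+6)*((x:ℚ)+5)*((x:ℚ)+4)*((x:ℚ)+3)*((x:ℚ)+2)*((x:ℚ)+1) * (x ! : ℚ) := by
  rw [show x+6 = (x+3)+3 by omega, fac3, fac3]; push_cast; ring

/-- The Zeilberger certificate polynomial for the Franel-type recurrence. -/
private def Pq (m k : ℕ) : ℚ :=
  4*(k:ℚ)^3 - 12*(k:ℚ)^2 + 12*(k:ℚ) - 4
  + ((m:ℚ)+1) * (39*(k:ℚ) - 18*(k:ℚ)^2 - 22)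
  + ((m:ℚ)+1)^2 * (27*(k:ℚ) - 32) - 14*((m:ℚ)+1)^3

/-- The telescoping function. -/
private def Hf (m k : ℕ) : ℚ :=
  if k ≤ m+2 then
    (3*(3*(m:ℚ)+4)*(3*(m:ℚ)+5) * (k:ℚ)^3 * ((3*(m+1))! : ℚ) * Pq m k)
      / (((m:ℚ)+1) * ((k)! : ℚ)^3 * (((m+2-k)! : ℚ))^3)
  else 0

private lemma key (m k : ℕ) (hk : k < m+3) :
    ((m:ℚ)+2)^4 * (((3*(m+2))! : ℚ) / ((k ! : ℚ)^3 * (((m+2-k)! : ℚ))^3))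
    - (if k ≤ m+1 then
        (3 * (7 * ((m:ℚ)+1)^2 + 7*((m:ℚ)+1) + 2) * (3*((m:ℚ)+1)+2) * (3*((m:ℚ)+1)+1))
          * (((3*(m+1))! : ℚ) / ((k ! : ℚ)^3 * (((m+1-k)! : ℚ))^3)) else 0)
    - (if k ≤ m then
        (72 * (3*((m:ℚ)+1)+2) * (3*((m:ℚ)+1)+1) * (3*((m:ℚ)+1)-1) * (3*((m:ℚ)+1)-2))
          * (((3*m)! : ℚ) / ((k ! : ℚ)^3 * (((m-k)! : ℚ))^3)) else 0)
    = Hf m (k+1) - Hf m k := by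
  have hkf : (k ! : ℚ) ≠ 0 := Nat.cast_ne_zero.mpr (Nat.factorial_ne_zero k)
  rcases Nat.lt_or_ge k (m+1) with h | h
  · -- interior case k ≤ m
    obtain ⟨j, rfl⟩ : ∃ j, m = k + j := ⟨m - k, by omega⟩
    have hjf : (j ! : ℚ) ≠ 0 := Nat.cast_ne_zero.mpr (Nat.factorial_ne_zero j)
    simp only [Hf, Pq]
    rw [if_pos (show k ≤ k+j+1 by omega), if_pos (show k ≤ k+j by omega),
      if_pos (show k+1 ≤ k+j+2 by omega), if_pos (show k ≤ k+j+2 by omega)]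
    simp only [show k+j+2-(k+1) = j+1 by omega, show k+j+2-k = j+2 by omega,
      show k+j+1-k = j+1 by omega, show k+j-k = j by omega,
      show 3*(k+j+2) = 3*(k+j)+6 by omega, show 3*(k+j+1) = 3*(k+j)+3 by omega]
    rw [fac6, fac3, fac2, fc, fc]
    push_cast
    have h1 : (j:ℚ)+1 ≠ 0 := by positivity
    have h2 : (j:ℚ)+2 ≠ 0 := by positivity
    have h3 : (k:ℚ)+1 ≠ 0 := by positivity
    have h4 : (k:ℚ)+(j:ℚ)+1 ≠ 0 := by positivity
    field_simp
    ring
  · have hvf : ((m+1)! : ℚ) ≠ 0 := Nat.cast_ne_zero.mpr (Nat.factorial_ne_zero _)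
    have hm1 : (m:ℚ)+1 ≠ 0 := by positivity
    have hm2 : (m:ℚ)+2 ≠ 0 := by positivity
    have hkk : k = m+1 ∨ k = m+2 := by omega
    rcases hkk with rfl | rfl
    · -- k = m+1
      simp only [Hf, Pq]
      rw [if_pos (show m+1 ≤ m+1 by omega), if_neg (show ¬ (m+1 ≤ m) by omega),
        if_pos (show m+1+1 ≤ m+2 by omega), if_pos (show m+1 ≤ m+2 by omega)]
      simp only [show m+2-(m+1+1) = 0 by omega, show m+2-(m+1) = 1 by omega,
        show m+1-(m+1) = 0 by omega, show 3*(m+2) = 3*(m+1)+3 by omega]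
      rw [fac3, fc (m+1), Nat.factorial_zero, Nat.factorial_one]
      push_cast
      field_simp
      ring
    · -- k = m+2
      simp only [Hf, Pq]
      rw [if_neg (show ¬ (m+2 ≤ m+1) by omega), if_neg (show ¬ (m+2 ≤ m) by omega),
        if_neg (show ¬ (m+2+1 ≤ m+2) by omega), if_pos (show m+2 ≤ m+2 by omega)]
      simp only [show m+2-(m+2) = 0 by omega, show 3*(m+2) = 3*(m+1)+3 by omega]
      rw [fac3, Nat.factorial_zero]
      push_cast
      field_simp
      ring

/-- For `aₙ = Σ_{k=0}^{n} (3n)!/((k!)³((n−k)!)³)`, one has, for every `n ≥ 1`,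
`(n+1)⁴·a_{n+1} = 3(7n²+7n+2)(3n+2)(3n+1)·aₙ + 72(3n+2)(3n+1)(3n−1)(3n−2)·a_{n−1}`. -/
theorem diagonal_period_recurrence (a : ℕ → ℚ)
    (ha : ∀ n, a n = ∑ k ∈ Finset.range (n + 1),
        ((3 * n)! : ℚ) / (((k ! : ℚ)) ^ 3 * (((n - k)! : ℚ)) ^ 3))
    (n : ℕ) (hn : 1 ≤ n) :
    ((n : ℚ) + 1) ^ 4 * a (n + 1) =
      3 * (7 * (n : ℚ) ^ 2 + 7 * (n : ℚ) + 2) * (3 * (n : ℚ) + 2) * (3 * (n : ℚ) + 1) * a n +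
      72 * (3 * (n : ℚ) + 2) * (3 * (n : ℚ) + 1) * (3 * (n : ℚ) - 1) * (3 * (n : ℚ) - 2) *
        a (n - 1) := by
  obtain ⟨m, rfl⟩ : ∃ m, n = m + 1 := ⟨n - 1, by omega⟩
  simp only [Nat.add_sub_cancel, ha]
  simp only [show m+1+1 = m+2 by omega, show m+2+1 = m+3 by omega]
  push_cast
  have hsum := Finset.sum_congr rfl (fun k hk => key m k (Finset.mem_range.mp hk))
  rw [Finset.sum_range_sub (Hf m)] at hsum
  rw [Finset.sum_sub_distrib, Finset.sum_sub_distrib] at hsum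
  have e1 : ∑ k ∈ Finset.range (m+3),
      ((m:ℚ)+2)^4 * (((3*(m+2))! : ℚ) / ((k ! : ℚ)^3 * (((m+2-k)! : ℚ))^3))
      = ((m:ℚ)+2)^4 * ∑ k ∈ Finset.range (m+3),
        (((3*(m+2))! : ℚ) / ((k ! : ℚ)^3 * (((m+2-k)! : ℚ))^3)) := by
    rw [Finset.mul_sum]
  have e2 : ∑ k ∈ Finset.range (m+3), (if k ≤ m+1 then
      (3 * (7 * ((m:ℚ)+1)^2 + 7*((m:ℚ)+1) + 2) * (3*((m:ℚ)+1)+2) * (3*((m:ℚ)+1)+1))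
        * (((3*(m+1))! : ℚ) / ((k ! : ℚ)^3 * (((m+1-k)! : ℚ))^3)) else 0)
      = (3 * (7 * ((m:ℚ)+1)^2 + 7*((m:ℚ)+1) + 2) * (3*((m:ℚ)+1)+2) * (3*((m:ℚ)+1)+1))
        * ∑ k ∈ Finset.range (m+2),
          (((3*(m+1))! : ℚ) / ((k ! : ℚ)^3 * (((m+1-k)! : ℚ))^3)) := by
    rw [Finset.sum_range_succ, if_neg (by omega), add_zero, Finset.mul_sum]
    exact Finset.sum_congr rfl fun k hk =>
      if_pos (by have := Finset.mem_range.mp hk; omega)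
  have e3 : ∑ k ∈ Finset.range (m+3), (if k ≤ m then
      (72 * (3*((m:ℚ)+1)+2) * (3*((m:ℚ)+1)+1) * (3*((m:ℚ)+1)-1) * (3*((m:ℚ)+1)-2))
        * (((3*m)! : ℚ) / ((k ! : ℚ)^3 * (((m-k)! : ℚ))^3)) else 0)
      = (72 * (3*((m:ℚ)+1)+2) * (3*((m:ℚ)+1)+1) * (3*((m:ℚ)+1)-1) * (3*((m:ℚ)+1)-2))
        * ∑ k ∈ Finset.range (m+1),
          (((3*m)! : ℚ) / ((k ! : ℚ)^3 * (((m-k)! : ℚ))^3)) := by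
    rw [Finset.sum_range_succ, if_neg (by omega), Finset.sum_range_succ, if_neg (by omega),
      add_zero, add_zero, Finset.mul_sum]
    exact Finset.sum_congr rfl fun k hk =>
      if_pos (by have := Finset.mem_range.mp hk; omega)
  rw [e1, e2, e3] at hsum
  have hHtop : Hf m (m+3) = 0 := by
    simp only [Hf]; rw [if_neg (by omega)]
  have hH0 : Hf m 0 = 0 := by
    simp only [Hf]; rw [if_pos (by omega)]; norm_num
  rw [hHtop, hH0] at hsum
  linear_combination hsum
end

section
/- Let x, y ∈ ℂ. There exists a pair (A, B) ∈ ℂ² with (A, B) ≠ (0, 0) satisfying A³ = x·(A+B)³ and B³ = y·(A+B)³ if and only if (1 − x − y)³ = 27xy, that is, if and only if 1 − 3(x+y) + 3(x² − 7xy + y²) − (x³ + 3x²y + 3xy² + y³) = 0. -/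
/-- For `x, y ∈ ℂ`, the two binary cubics `A³ − x(A+B)³` and `B³ − y(A+B)³` have a common
nontrivial root `(A,B) ≠ (0,0)` if and only if `(1 − x − y)³ = 27xy`, i.e. if and only if
`1 − 3(x+y) + 3(x² − 7xy + y²) − (x³ + 3x²y + 3xy² + y³) = 0`. -/
theorem discriminant_of_mirror_family (x y : ℂ) :
    ((∃ A B : ℂ, (A, B) ≠ (0, 0) ∧ A ^ 3 = x * (A + B) ^ 3 ∧ B ^ 3 = y * (A + B) ^ 3) ↔
      (1 - x - y) ^ 3 = 27 * x * y) ∧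
    ((1 - x - y) ^ 3 = 27 * x * y ↔
      1 - 3 * (x + y) + 3 * (x ^ 2 - 7 * x * y + y ^ 2) -
        (x ^ 3 + 3 * x ^ 2 * y + 3 * x * y ^ 2 + y ^ 3) = 0) := by
  constructor
  · constructor
    · rintro ⟨A, B, hne, h1, h2⟩
      have hs : A + B ≠ 0 := by
        intro hs
        apply hne
        have hA : A = 0 := by
          have hA3 : A ^ 3 = 0 := by rw [h1, hs]; ring
          exact pow_eq_zero_iff (by norm_num) |>.mp hA3
        have hB : B = 0 := by
          have hB3 : B ^ 3 = 0 := by rw [h2, hs]; ring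
          exact pow_eq_zero_iff (by norm_num) |>.mp hB3
        simp [hA, hB]
      have key : (1 - x - y) * (A + B) ^ 3 = 3 * A * B * (A + B) := by
        linear_combination h1 + h2
      have key3 : ((1 - x - y) ^ 3 - 27 * x * y) * (A + B) ^ 9 = 0 := by
        linear_combination
          (((1 - x - y) * (A + B) ^ 3) ^ 2 +
            (1 - x - y) * (A + B) ^ 3 * (3 * A * B * (A + B)) +
            (3 * A * B * (A + B)) ^ 2) * key +
          27 * B ^ 3 * (A + B) ^ 3 * h1 + 27 * x * (A + B) ^ 6 * h2
      have h9 : (A + B) ^ 9 ≠ 0 := pow_ne_zero _ hs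
      have hz := (mul_eq_zero.mp key3).resolve_right h9
      linear_combination hz
    · intro h
      by_cases h3 : x + y = -2
      · -- degenerate case: x = y = -1
        have hy : y = -2 - x := by linear_combination h3
        have hx : x = -1 := by
          have hsq : (x + 1) ^ 2 = 0 := by
            rw [hy] at h; linear_combination (1/27 : ℂ) * h
          have hx1 : x + 1 = 0 := pow_eq_zero_iff (by norm_num) |>.mp hsq
          linear_combination hx1
        have hy' : y = -1 := by linear_combination hy - hx
        subst hx; subst hy'
        have hI : Complex.I ^ 2 = -1 := Complex.I_sq
        have hr : ((Real.sqrt 3 : ℝ) : ℂ) ^ 2 = 3 := by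
          norm_cast
          exact Real.sq_sqrt (by norm_num)
        set s : ℂ := ((Real.sqrt 3 : ℝ) : ℂ) with hsdef
        refine ⟨(1 + Complex.I * s) / 2, 1 - (1 + Complex.I * s) / 2, ?_, ?_, ?_⟩
        · intro hcon
          rw [Prod.mk.injEq] at hcon
          obtain ⟨hc1, hc2⟩ := hcon
          exact one_ne_zero (by linear_combination hc1 + hc2 : (1 : ℂ) = 0)
        · linear_combination ((3 * s ^ 2 + Complex.I * s ^ 3) / 8) * hI +
            ((-3 - Complex.I * s) / 8) * hr
        · linear_combination ((3 * s ^ 2 - Complex.I * s ^ 3) / 8) * hI +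
            ((-3 + Complex.I * s) / 8) * hr
      · -- generic case
        refine ⟨1 + 2 * x - y, 1 - x + 2 * y, ?_, ?_, ?_⟩
        · intro hcon
          rw [Prod.mk.injEq] at hcon
          obtain ⟨hc1, hc2⟩ := hcon
          exact h3 (by linear_combination hc1 + hc2)
        · linear_combination (1 + x) * h
        · linear_combination (1 + y) * h
  · constructor
    · intro h; linear_combination h
    · intro h; linear_combination h
end
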